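/- Let u, w : [0,T] → H₀¹(Ω) with u the weak solution of u_t - ∇·α(∇u) = f and w(t) the elliptic reconstruction satisfying ⟨α(∇w), ∇v⟩ = ⟨g, v⟩ for all v ∈ H₀¹(Ω), where g = -AU + f - Πf and U solves the semidiscrete IPDG scheme ⟨U_t, V⟩ + B(U,V) = ⟨f,V⟩ for all V ∈ S^p. Then with e = U - u, for all v ∈ H₀¹(Ω): ⟨e_t, v⟩ + ⟨α(∇w) - α(∇u), ∇v⟩ = 0. -/

import Mathlib

open RealInnerProductSpace

/-! The scheme says that `Uₜ - AU ∈ Sp` has the same inner products with `Sp` as `f`, so it is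
`Πf`. Hence the source of the elliptic reconstruction is `g = f - Uₜ`, and subtracting the weak
form of the PDE from the reconstruction equation leaves exactly the error relation. -/

theorem Submodule.starProjection_eq_sub_of_inner_add_eq {E : Type*} [NormedAddCommGroup E]
    [InnerProductSpace ℝ E] {K : Submodule ℝ E} [K.HasOrthogonalProjection] {x y f : E}
    (b : E → ℝ) (hx : x ∈ K) (hy : y ∈ K) (hb : ∀ V ∈ K, ⟪-y, V⟫ = b V)
    (h : ∀ V ∈ K, ⟪x, V⟫ + b V = ⟪f, V⟫) : K.starProjection f = x - y :=
  K.eq_starProjection_of_mem_of_inner_eq_zero (K.sub_mem hx hy) fun V hV => by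
    rw [inner_sub_left, inner_sub_left, ← h V hV, ← hb V hV, inner_neg_left]
    ring

theorem differential_error_relation_general {L2 Gr : Type*} [NormedAddCommGroup L2]
    [InnerProductSpace ℝ L2] [NormedAddCommGroup Gr] [InnerProductSpace ℝ Gr]
    (H01 Sp : Submodule ℝ L2) [CompleteSpace Sp]
    (grad : H01 →ₗ[ℝ] Gr) (T : ℝ)
    (u w : ℝ → H01)
    (ut Ut : ℝ → L2) (f g AU : ℝ → L2)
    (α : ℝ → Gr → Gr) (B : ℝ → L2 → ℝ)
    (hUt : ∀ t, Ut t ∈ Sp) (hAU : ∀ t, AU t ∈ Sp)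
    -- weak form of the quasilinear parabolic PDE (1)
    (hpde : ∀ t ∈ Set.Icc 0 T, ∀ v : H01,
      ⟪ut t, (v : L2)⟫ + ⟪α t (grad (u t)), grad v⟫ = ⟪f t, (v : L2)⟫)
    -- definition of `g := -AU + f - Πf`
    (hg : ∀ t, g t = -(AU t) + f t - (Sp.orthogonalProjectionOnto (f t) : L2))
    -- definition (8) of the discrete operator: `⟨-AU, V⟩ = B(U, V)` for `V ∈ Sp`
    (hA : ∀ t, ∀ V ∈ Sp, ⟪-(AU t), V⟫ = B t V)
    -- the semidiscrete IPDG scheme (6)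
    (hscheme : ∀ t ∈ Set.Icc 0 T, ∀ V ∈ Sp, ⟪Ut t, V⟫ + B t V = ⟪f t, V⟫)
    -- the elliptic reconstruction (7)
    (hrec : ∀ t ∈ Set.Icc 0 T, ∀ v : H01,
      ⟪α t (grad (w t)), grad v⟫ = ⟪g t, (v : L2)⟫) :
    ∀ t ∈ Set.Icc 0 T, ∀ v : H01,
      ⟪Ut t - ut t, (v : L2)⟫ +
        ⟪α t (grad (w t)) - α t (grad (u t)), grad v⟫ = 0 := by
  intro t ht v
  have hproj : Sp.starProjection (f t) = Ut t - AU t :=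
    Sp.starProjection_eq_sub_of_inner_add_eq (B t) (hUt t) (hAU t) (hA t) (hscheme t ht)
  have hg_eq : g t = f t - Ut t := by
    rw [hg t, Submodule.coe_orthogonalProjectionOnto_apply, hproj]
    abel
  rw [inner_sub_left, inner_sub_left, hrec t ht v, hg_eq, inner_sub_left, ← hpde t ht v]
  ring

/-- Lemma 3.3, differential error relation. `L2` plays the role of
`L²(Ω)`, `Gr` that of `L²(Ω)ᵈ`, `H01 ⊆ L2` that of `H₀¹(Ω)` with weak gradient `grad`,
`Sp ⊆ L2` the discontinuous finite element space, `α t` the (Nemytskii) quasilinear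
flux, `B t` the IPDG semilinear form `B(U(t), ·)`, `AU t = A(t)U(t)` the discrete
operator, and `Π` the `L²`-orthogonal projection onto `Sp`. -/
theorem differential_error_relation {L2 Gr : Type*} [NormedAddCommGroup L2]
    [InnerProductSpace ℝ L2] [NormedAddCommGroup Gr] [InnerProductSpace ℝ Gr]
    (H01 Sp : Submodule ℝ L2) [CompleteSpace Sp]
    (grad : H01 →ₗ[ℝ] Gr) (T : ℝ)
    (u w : ℝ → H01) (U : ℝ → Sp)
    (ut Ut : ℝ → L2) (f g AU : ℝ → L2)
    (α : ℝ → Gr → Gr) (B : ℝ → L2 → ℝ)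
    (hu : ∀ t ∈ Set.Icc 0 T, HasDerivAt (fun s => ((u s : L2))) (ut t) t)
    (hU : ∀ t ∈ Set.Icc 0 T, HasDerivAt (fun s => ((U s : L2))) (Ut t) t)
    (hUt : ∀ t, Ut t ∈ Sp) (hAU : ∀ t, AU t ∈ Sp)
    -- weak form of the quasilinear parabolic PDE (1)
    (hpde : ∀ t ∈ Set.Icc 0 T, ∀ v : H01,
      ⟪ut t, (v : L2)⟫ + ⟪α t (grad (u t)), grad v⟫ = ⟪f t, (v : L2)⟫)
    -- definition of `g := -AU + f - Πf`
    (hg : ∀ t, g t = -(AU t) + f t - (Sp.orthogonalProjectionOnto (f t) : L2))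
    -- definition (8) of the discrete operator: `⟨-AU, V⟩ = B(U, V)` for `V ∈ Sp`
    (hA : ∀ t, ∀ V ∈ Sp, ⟪-(AU t), V⟫ = B t V)
    -- the semidiscrete IPDG scheme (6)
    (hscheme : ∀ t ∈ Set.Icc 0 T, ∀ V ∈ Sp, ⟪Ut t, V⟫ + B t V = ⟪f t, V⟫)
    -- the elliptic reconstruction (7)
    (hrec : ∀ t ∈ Set.Icc 0 T, ∀ v : H01,
      ⟪α t (grad (w t)), grad v⟫ = ⟪g t, (v : L2)⟫) :
    ∀ t ∈ Set.Icc 0 T, ∀ v : H01,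
      ⟪Ut t - ut t, (v : L2)⟫ +
        ⟪α t (grad (w t)) - α t (grad (u t)), grad v⟫ = 0 :=
  differential_error_relation_general H01 Sp grad T u w ut Ut f g AU α B hUt hAU hpde hg hA hscheme
    hrec
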